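/- arXiv:2504.05609 — 3 statements merged into one kernel-verified Lean document; each statement's English description precedes it below -/
import Mathlib

section
/- Let f : ℝⁿ → ℝ be locally Lipschitz around x̄ ∈ ℝⁿ. Then for every d ∈ ℝⁿ, the function g(x) := max{f(x), 0} satisfies g'(x̄; d) ≤ max{ f(x̄) + f'(x̄; d), 0 } − max{ f(x̄), 0 }, where f'(x; d) denotes the upper directional derivative. -/
open Filter

/-- The upper directional derivative of `f` at `x` in direction `d`:
`f'(x; d) := limsup_{t → 0⁺} (f(x + t d) − f(x))/t`. -/
noncomputable def upperDirDeriv {n : ℕ} (f : EuclideanSpace ℝ (Fin n) → ℝ)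
    (x d : EuclideanSpace ℝ (Fin n)) : ℝ :=
  Filter.limsup (fun t : ℝ => (f (x + t • d) - f x) / t) (nhdsWithin 0 (Set.Ioi 0))

open Set Topology

/-!
Write `a = f xb` and `q t` for the difference quotient of `f`. Since `f (xb + t • d) = a + t * q t`
and `s ↦ max s 0` is convex, for `0 < t ≤ 1` the difference quotient of `max f 0` is at most
`max (a + q t) 0 - max a 0`. This is monotone and continuous in `q t`, so it passes to the limsup;
the Lipschitz bound `|q t| ≤ K ‖d‖` supplies the boundedness that the limsups need.
-/

theorem ConvexOn.slope_le_sub {E : Type*} [AddCommGroup E] [Module ℝ E] {φ : E → ℝ}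
    (hφ : ConvexOn ℝ univ φ) (a s : E) {t : ℝ} (ht0 : 0 < t) (ht1 : t ≤ 1) :
    (φ (a + t • s) - φ a) / t ≤ φ (a + s) - φ a := by
  have h := hφ.2 (mem_univ a) (mem_univ (a + s)) (sub_nonneg.2 ht1) ht0.le (by ring)
  rw [show (1 - t) • a + t • (a + s) = a + t • s by module, smul_eq_mul, smul_eq_mul] at h
  rw [div_le_iff₀ ht0]
  linarith

theorem LipschitzOnWith.max_const {α : Type*} [PseudoMetricSpace α] {f : α → ℝ} {K : NNReal}
    {U : Set α} (hf : LipschitzOnWith K f U) (a : ℝ) :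
    LipschitzOnWith K (fun x => max (f x) a) U :=
  lipschitzOnWith_iff_restrict.2 (hf.to_restrict.max_const a)

section Slope

variable {E : Type*} [SeminormedAddCommGroup E] [NormedSpace ℝ E] {f : E → ℝ} {K : NNReal}
  {U : Set E} {x : E}

theorem LipschitzOnWith.eventually_abs_slope_le (hf : LipschitzOnWith K f U) (hU : U ∈ 𝓝 x)
    (d : E) : ∀ᶠ t in 𝓝[>] (0 : ℝ), |(f (x + t • d) - f x) / t| ≤ K * ‖d‖ := by
  have hline : Tendsto (fun t : ℝ => x + t • d) (𝓝 0) (𝓝 x) :=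
    Continuous.tendsto' (by fun_prop) 0 x (by simp)
  filter_upwards [nhdsWithin_le_nhds (hline.eventually_mem hU), self_mem_nhdsWithin]
    with t htU (ht : 0 < t)
  have h := hf.dist_le_mul _ htU _ (mem_of_mem_nhds hU)
  rw [dist_eq_norm, dist_eq_norm, add_sub_cancel_left, norm_smul, Real.norm_of_nonneg ht.le,
    Real.norm_eq_abs] at h
  rw [abs_div, abs_of_pos ht, div_le_iff₀ ht]
  linarith

theorem LipschitzOnWith.isBoundedUnder_le_slope (hf : LipschitzOnWith K f U) (hU : U ∈ 𝓝 x)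
    (d : E) : IsBoundedUnder (· ≤ ·) (𝓝[>] (0 : ℝ)) fun t => (f (x + t • d) - f x) / t :=
  isBoundedUnder_of_eventually_le <|
    (hf.eventually_abs_slope_le hU d).mono fun _ h => (abs_le.1 h).2

theorem LipschitzOnWith.isCoboundedUnder_le_slope (hf : LipschitzOnWith K f U) (hU : U ∈ 𝓝 x)
    (d : E) : IsCoboundedUnder (· ≤ ·) (𝓝[>] (0 : ℝ)) fun t => (f (x + t • d) - f x) / t :=
  isCoboundedUnder_le_of_eventually_le _ <|
    (hf.eventually_abs_slope_le hU d).mono fun _ h => (abs_le.1 h).1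

end Slope

theorem Filter.limsup_le_apply_limsup {ι R S : Type*}
    [ConditionallyCompleteLinearOrder R] [TopologicalSpace R] [OrderTopology R]
    [ConditionallyCompleteLinearOrder S] [TopologicalSpace S] [OrderTopology S]
    {F : Filter ι} [NeBot F] {u : ι → S} {v : ι → R} {h : R → S} (h_mono : Monotone h)
    (h_cont : ContinuousAt h (limsup v F)) (huv : ∀ᶠ i in F, u i ≤ h (v i))
    (hu : IsCoboundedUnder (· ≤ ·) F u) (hv : IsBoundedUnder (· ≤ ·) F v)
    (hv' : IsCoboundedUnder (· ≤ ·) F v) :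
    limsup u F ≤ h (limsup v F) := by
  rw [h_mono.map_limsup_of_continuousAt v h_cont hv hv']
  exact limsup_le_limsup huv hu (h_mono.isBoundedUnder_le_comp hv)

/-- if `f` is locally Lipschitz around `xb`, then the function
`g(x) := max{f(x), 0}` satisfies
`g'(xb; d) ≤ max{f(xb) + f'(xb; d), 0} − max{f(xb), 0}`. -/
theorem maxZero_upperDirDeriv_le {n : ℕ}
    (f : EuclideanSpace ℝ (Fin n) → ℝ) (xb : EuclideanSpace ℝ (Fin n))
    (hf : ∃ K : NNReal, ∃ U ∈ nhds xb, LipschitzOnWith K f U)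
    (d : EuclideanSpace ℝ (Fin n)) :
    upperDirDeriv (fun x => max (f x) 0) xb d ≤
      max (f xb + upperDirDeriv f xb d) 0 - max (f xb) 0 := by
  obtain ⟨K, U, hU, hfU⟩ := hf
  have hφ : ConvexOn ℝ univ fun s : ℝ => max s 0 :=
    (convexOn_id convex_univ).sup (convexOn_const 0 convex_univ)
  have hslope : ∀ᶠ t in 𝓝[>] (0 : ℝ), (max (f (xb + t • d)) 0 - max (f xb) 0) / t ≤
      max (f xb + (f (xb + t • d) - f xb) / t) 0 - max (f xb) 0 := by
    filter_upwards [Ioc_mem_nhdsGT zero_lt_one] with t ⟨ht0, ht1⟩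
    have h := hφ.slope_le_sub (f xb) ((f (xb + t • d) - f xb) / t) ht0 ht1
    rwa [smul_eq_mul, mul_div_cancel₀ _ ht0.ne', add_sub_cancel] at h
  have hmono : Monotone fun s : ℝ => max (f xb + s) 0 - max (f xb) 0 := fun _ _ hs =>
    sub_le_sub_right (max_le_max_right 0 (add_le_add_right hs _)) _
  exact limsup_le_apply_limsup hmono (by fun_prop) hslope
    ((hfU.max_const 0).isCoboundedUnder_le_slope hU d) (hfU.isBoundedUnder_le_slope hU d)
    (hfU.isCoboundedUnder_le_slope hU d)
end

section
/- Let X ⊆ ℝⁿ be a nonempty convex set, let x ∈ X, p > 0, α > 0, and let d ∈ ℝⁿ with x + d ∈ X. Let g₀, g₁ : ℝⁿ → ℝ be differentiable at x with gradients ∇g₀(x), ∇g₁(x); let h₀, h₁ : ℝⁿ → ℝ be locally Lipschitz around x; and let v₀, v₁ ∈ ℝⁿ satisfy (−h_i)'(x; d) ≤ ⟨−v_i, d⟩ for i = 0, 1. Let λ ∈ [0,1] satisfy λ · min{φ₁(x) + ⟨∇g₁(x) − v₁, d⟩, 0} = 0 and (1 − λ) · max{φ₁(x) + ⟨∇g₁(x)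 − v₁, d⟩, 0} = 0, where φ₁ := g₁ − h₁, and suppose that for every u ∈ X, ⟨(1/p)(∇g₀(x) − v₀) + λ(∇g₁(x) − v₁) + α d, u − (x + d)⟩ ≥ 0. Then (φ_p)'(x; d) ≤ (1/p)⟨∇g₀(x) − v₀, d⟩ + λ⟨∇g₁(x) − v₁, d⟩ ≤ −α‖d‖². -/
/-!
Along `t ↦ x + t • d`, the difference quotients of `gᵢ - hᵢ` stay bounded as `t → 0⁺`
(`gᵢ` is differentiable, `hᵢ` is Lipschitz), and on bounded quotients the `limsup` is
subadditive and positively homogeneous. Hence `φ_p'(x; d)` is at most `1/p` times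
`⟪∇g₀ - v₀, d⟫` plus the upper derivative of `max (g₁ - h₁) 0`. Depending on the sign of
`φ₁(x) = g₁ x - h₁ x`, the latter is `0`, `φ₁'(x; d)` or `max (φ₁'(x; d)) 0`, and the two
complementarity conditions on `λ` bound each case by `λ ⟪∇g₁ - v₁, d⟫`. The second inequality is
the variational inequality tested at `u = x`.
-/

open Filter
open scoped RealInnerProductSpace

open Asymptotics Topology

lemma isBoundedUnder_le_and_ge_of_isBigO_one {α : Type*} {l : Filter α} {q : α → ℝ}
    (hq : q =O[l] fun _ => (1 : ℝ)) :
    l.IsBoundedUnder (· ≤ ·) q ∧ l.IsBoundedUnder (· ≥ ·) q :=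
  isBoundedUnder_le_abs.mp hq.isBoundedUnder_le

section DirDiffQuot

variable {E : Type*} [NormedAddCommGroup E] [NormedSpace ℝ E]

noncomputable def dirDiffQuot (f : E → ℝ) (x d : E) (t : ℝ) : ℝ := (f (x + t • d) - f x) / t

lemma tendsto_add_smul_nhdsGT_zero (x d : E) :
    Tendsto (fun t : ℝ => x + t • d) (𝓝[>] 0) (𝓝 x) :=
  tendsto_nhdsWithin_of_tendsto_nhds (Continuous.tendsto' (by fun_prop) 0 x (by simp))

lemma dirDiffQuot_const_mul_add (c : ℝ) (f g : E → ℝ) (x d : E) :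
    dirDiffQuot (fun y => c * f y + g y) x d =
      fun t => c * dirDiffQuot f x d t + dirDiffQuot g x d t := by
  funext t; simp only [dirDiffQuot]; ring

lemma dirDiffQuot_sub (f g : E → ℝ) (x d : E) :
    dirDiffQuot (fun y => f y - g y) x d =
      dirDiffQuot f x d + dirDiffQuot (fun y => -g y) x d := by
  funext t; simp only [dirDiffQuot, Pi.add_apply]; ring

lemma dirDiffQuot_neg (f : E → ℝ) (x d : E) :
    dirDiffQuot (fun y => -f y) x d = fun t => -dirDiffQuot f x d t := by
  funext t; simp only [dirDiffQuot]; ring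

lemma abs_dirDiffQuot_max_zero_le (f : E → ℝ) (x d : E) (t : ℝ) :
    |dirDiffQuot (fun y => max (f y) 0) x d t| ≤ |dirDiffQuot f x d t| := by
  simp only [dirDiffQuot, abs_div]
  exact div_le_div_of_nonneg_right (abs_max_sub_max_le_abs _ _ _) (abs_nonneg t)

lemma HasFDerivAt.tendsto_dirDiffQuot {f : E → ℝ} {f' : E →L[ℝ] ℝ} {x : E}
    (hf : HasFDerivAt f f' x) (d : E) :
    Tendsto (dirDiffQuot f x d) (𝓝[>] 0) (𝓝 (f' d)) :=
  (hf.hasLineDerivAt d).tendsto_slope_zero_right.congr fun t => by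
    simp [dirDiffQuot, div_eq_inv_mul]

lemma HasFDerivAt.dirDiffQuot_sub_isBigO_one {g h : E → ℝ} {g' : E →L[ℝ] ℝ} {x d : E}
    (hg : HasFDerivAt g g' x) (hh : dirDiffQuot h x d =O[𝓝[>] 0] fun _ => (1 : ℝ)) :
    dirDiffQuot (fun y => g y - h y) x d =O[𝓝[>] 0] fun _ => (1 : ℝ) := by
  rw [dirDiffQuot_sub, dirDiffQuot_neg]
  exact ((hg.tendsto_dirDiffQuot d).isBigO_one ℝ).add hh.neg_left

lemma LipschitzOnWith.dirDiffQuot_isBigO_one {f : E → ℝ} {K : NNReal} {U : Set E} {x : E}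
    (hf : LipschitzOnWith K f U) (hU : U ∈ 𝓝 x) (d : E) :
    dirDiffQuot f x d =O[𝓝[>] 0] fun _ => (1 : ℝ) := by
  refine IsBigO.of_bound (K * ‖d‖) ?_
  filter_upwards [(tendsto_add_smul_nhdsGT_zero x d).eventually_mem hU, self_mem_nhdsWithin]
    with t htU (ht : 0 < t)
  have hdist := hf.dist_le_mul _ htU _ (mem_of_mem_nhds hU)
  rw [Real.dist_eq, dist_eq_norm, add_sub_cancel_left, norm_smul, Real.norm_of_nonneg ht.le]
    at hdist
  rw [Real.norm_eq_abs, dirDiffQuot, abs_div, abs_of_pos ht, div_le_iff₀ ht, norm_one]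
  linarith

lemma isBigO_dirDiffQuot_max_zero {f : E → ℝ} {x d : E}
    (hf : dirDiffQuot f x d =O[𝓝[>] 0] fun _ => (1 : ℝ)) :
    dirDiffQuot (fun y => max (f y) 0) x d =O[𝓝[>] 0] fun _ => (1 : ℝ) :=
  (isBigO_of_le _ (abs_dirDiffQuot_max_zero_le f x d)).trans hf

end DirDiffQuot

lemma HasGradientAt.tendsto_dirDiffQuot {F : Type*} [NormedAddCommGroup F] [InnerProductSpace ℝ F]
    [CompleteSpace F] {g : F → ℝ} {u x : F} (hg : HasGradientAt g u x) (d : F) :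
    Tendsto (dirDiffQuot g x d) (𝓝[>] 0) (𝓝 ⟪u, d⟫) := by
  simpa using hg.hasFDerivAt.tendsto_dirDiffQuot d

section UpperDirDeriv

variable {n : ℕ}
local notation "𝔼" => EuclideanSpace ℝ (Fin n)

lemma upperDirDeriv_eq_limsup (f : 𝔼 → ℝ) (x d : 𝔼) :
    upperDirDeriv f x d = limsup (dirDiffQuot f x d) (𝓝[>] 0) := rfl

lemma upperDirDeriv_const_mul_add_le {f g : 𝔼 → ℝ} {x d : 𝔼}
    (hf : dirDiffQuot f x d =O[𝓝[>] 0] fun _ => (1 : ℝ))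
    (hg : dirDiffQuot g x d =O[𝓝[>] 0] fun _ => (1 : ℝ)) {c : ℝ} (hc : 0 ≤ c) :
    upperDirDeriv (fun y => c * f y + g y) x d ≤
      c * upperDirDeriv f x d + upperDirDeriv g x d := by
  obtain ⟨hf_le, hf_ge⟩ := isBoundedUnder_le_and_ge_of_isBigO_one hf
  obtain ⟨hcf_le, hcf_ge⟩ := isBoundedUnder_le_and_ge_of_isBigO_one (hf.const_mul_left c)
  obtain ⟨hg_le, hg_ge⟩ := isBoundedUnder_le_and_ge_of_isBigO_one hg
  have hmul : c * upperDirDeriv f x d = limsup (fun t => c * dirDiffQuot f x d t) (𝓝[>] 0) :=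
    (monotone_mul_left_of_nonneg hc).map_limsup_of_continuousAt _
      (continuous_const_mul c).continuousAt hf_le hf_ge.isCoboundedUnder_le
  rw [hmul, upperDirDeriv_eq_limsup, dirDiffQuot_const_mul_add]
  exact limsup_add_le hcf_ge hcf_le hg_ge.isCoboundedUnder_le hg_le

lemma upperDirDeriv_sub_le_of_hasGradientAt {g h : 𝔼 → ℝ} {u v x d : 𝔼}
    (hg : HasGradientAt g u x) (hh : dirDiffQuot h x d =O[𝓝[>] 0] fun _ => (1 : ℝ))
    (hv : upperDirDeriv (fun y => -h y) x d ≤ ⟪-v, d⟫) :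
    upperDirDeriv (fun y => g y - h y) x d ≤ ⟪u - v, d⟫ := by
  obtain ⟨hnh_le, hnh_ge⟩ := isBoundedUnder_le_and_ge_of_isBigO_one
    (dirDiffQuot_neg h x d ▸ hh.neg_left)
  have hg' := hg.tendsto_dirDiffQuot d
  calc upperDirDeriv (fun y => g y - h y) x d
      ≤ limsup (dirDiffQuot g x d) (𝓝[>] 0) + upperDirDeriv (fun y => -h y) x d := by
        rw [upperDirDeriv_eq_limsup, dirDiffQuot_sub]
        exact limsup_add_le hg'.isBoundedUnder_ge hg'.isBoundedUnder_le
          hnh_ge.isCoboundedUnder_le hnh_le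
    _ ≤ ⟪u, d⟫ + ⟪-v, d⟫ := by rw [hg'.limsup_eq]; gcongr
    _ = ⟪u - v, d⟫ := by rw [inner_sub_left, inner_neg_left, sub_eq_add_neg]

lemma upperDirDeriv_max_zero_of_neg {φ : 𝔼 → ℝ} {x : 𝔼} (d : 𝔼) (hφ : ContinuousAt φ x)
    (hx : φ x < 0) : upperDirDeriv (fun y => max (φ y) 0) x d = 0 := by
  have hev : ∀ᶠ t in 𝓝[>] (0 : ℝ), φ (x + t • d) < 0 :=
    (hφ.tendsto.comp (tendsto_add_smul_nhdsGT_zero x d)).eventually_lt_const hx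
  rw [upperDirDeriv_eq_limsup, limsup_congr (v := fun _ => 0) (hev.mono fun t ht => ?_),
    limsup_const]
  simp [dirDiffQuot, max_eq_right ht.le, max_eq_right hx.le]

lemma upperDirDeriv_max_zero_of_pos {φ : 𝔼 → ℝ} {x : 𝔼} (d : 𝔼) (hφ : ContinuousAt φ x)
    (hx : 0 < φ x) : upperDirDeriv (fun y => max (φ y) 0) x d = upperDirDeriv φ x d := by
  have hev : ∀ᶠ t in 𝓝[>] (0 : ℝ), 0 < φ (x + t • d) :=
    (hφ.tendsto.comp (tendsto_add_smul_nhdsGT_zero x d)).eventually_const_lt hx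
  refine limsup_congr (hev.mono fun t ht => ?_)
  simp only [max_eq_left ht.le, max_eq_left hx.le]

lemma upperDirDeriv_max_zero_of_eq_zero {φ : 𝔼 → ℝ} {x d : 𝔼}
    (hφ : dirDiffQuot φ x d =O[𝓝[>] 0] fun _ => (1 : ℝ)) (hx : φ x = 0) :
    upperDirDeriv (fun y => max (φ y) 0) x d = max (upperDirDeriv φ x d) 0 := by
  obtain ⟨hle, hge⟩ := isBoundedUnder_le_and_ge_of_isBigO_one hφ
  have hmax : max (limsup (dirDiffQuot φ x d) (𝓝[>] 0)) 0 =
      limsup (fun t => max (dirDiffQuot φ x d t) 0) (𝓝[>] 0) :=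
    Monotone.map_limsup_of_continuousAt (f := fun r : ℝ => max r 0)
      (fun _ _ h => max_le_max_right 0 h) _ (by fun_prop) hle hge.isCoboundedUnder_le
  rw [upperDirDeriv_eq_limsup φ, hmax, upperDirDeriv_eq_limsup]
  refine limsup_congr (eventually_mem_nhdsWithin.mono fun t (ht : 0 < t) => ?_)
  simp only [dirDiffQuot, hx, max_self, sub_zero, ← max_div_div_right ht.le, zero_div]

lemma upperDirDeriv_max_zero_le_of_complementarity {φ : 𝔼 → ℝ} {x d : 𝔼} {s lam : ℝ}
    (hcont : ContinuousAt φ x) (hbdd : dirDiffQuot φ x d =O[𝓝[>] 0] fun _ => (1 : ℝ))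
    (hφ : upperDirDeriv φ x d ≤ s) (hlam : lam ∈ Set.Icc (0 : ℝ) 1)
    (hc1 : lam * min (φ x + s) 0 = 0) (hc2 : (1 - lam) * max (φ x + s) 0 = 0) :
    upperDirDeriv (fun y => max (φ y) 0) x d ≤ lam * s := by
  obtain ⟨hlam0, hlam1⟩ := hlam
  have lam_eq_zero : φ x + s < 0 → lam = 0 := fun h => by
    simpa [min_eq_left h.le, h.ne] using hc1
  have lam_eq_one : 0 < φ x + s → lam = 1 := fun h => by
    have : 1 - lam = 0 := by simpa [max_eq_left h.le, h.ne'] using hc2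
    linarith
  rcases lt_trichotomy (φ x) 0 with hneg | hzero | hpos
  · rw [upperDirDeriv_max_zero_of_neg d hcont hneg]
    rcases lt_or_ge (φ x + s) 0 with h | h
    · simp [lam_eq_zero h]
    · nlinarith
  · rw [upperDirDeriv_max_zero_of_eq_zero hbdd hzero]
    refine (max_le_max_right 0 hφ).trans ?_
    rcases lt_trichotomy s 0 with h | rfl | h
    · rw [lam_eq_zero (by linarith), max_eq_right h.le, zero_mul]
    · simp
    · rw [lam_eq_one (by linarith), max_eq_left h.le, one_mul]
  · rw [upperDirDeriv_max_zero_of_pos d hcont hpos]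
    rcases le_or_gt s 0 with h | h
    · nlinarith
    · rw [lam_eq_one (by linarith)]
      linarith

end UpperDirDeriv

lemma inner_le_neg_mul_norm_sq_of_forall_inner_nonneg {F : Type*} [NormedAddCommGroup F]
    [InnerProductSpace ℝ F] {X : Set F} {x d w : F} {α : ℝ} (hx : x ∈ X)
    (h : ∀ u ∈ X, 0 ≤ ⟪w + α • d, u - (x + d)⟫) : ⟪w, d⟫ ≤ -α * ‖d‖ ^ 2 := by
  have hxd := h x hx
  rw [sub_add_cancel_left, inner_neg_right, inner_add_left, real_inner_smul_left,
    real_inner_self_eq_norm_sq] at hxd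
  linarith

theorem penalty_descent_direction_general {n : ℕ} (X : Set (EuclideanSpace ℝ (Fin n)))
    (x : EuclideanSpace ℝ (Fin n)) (hx : x ∈ X)
    (p α : ℝ) (hp : 0 < p)
    (d : EuclideanSpace ℝ (Fin n))
    (g₀ g₁ h₀ h₁ : EuclideanSpace ℝ (Fin n) → ℝ)
    (u₀ u₁ : EuclideanSpace ℝ (Fin n))
    (hg₀ : HasGradientAt g₀ u₀ x) (hg₁ : HasGradientAt g₁ u₁ x)
    (hh₀ : ∃ K : NNReal, ∃ U ∈ nhds x, LipschitzOnWith K h₀ U)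
    (hh₁ : ∃ K : NNReal, ∃ U ∈ nhds x, LipschitzOnWith K h₁ U)
    (v₀ v₁ : EuclideanSpace ℝ (Fin n))
    (hv₀ : upperDirDeriv (fun y => -h₀ y) x d ≤ ⟪-v₀, d⟫)
    (hv₁ : upperDirDeriv (fun y => -h₁ y) x d ≤ ⟪-v₁, d⟫)
    (lam : ℝ) (hlam : lam ∈ Set.Icc (0 : ℝ) 1)
    (hc1 : lam * min ((g₁ x - h₁ x) + ⟪u₁ - v₁, d⟫) 0 = 0)
    (hc2 : (1 - lam) * max ((g₁ x - h₁ x) + ⟪u₁ - v₁, d⟫) 0 = 0)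
    (hvi : ∀ u ∈ X,
      0 ≤ ⟪(1 / p) • (u₀ - v₀) + lam • (u₁ - v₁) + α • d, u - (x + d)⟫) :
    upperDirDeriv (fun y => (1 / p) * (g₀ y - h₀ y) + max (g₁ y - h₁ y) 0) x d ≤
        (1 / p) * ⟪u₀ - v₀, d⟫ + lam * ⟪u₁ - v₁, d⟫ ∧
      (1 / p) * ⟪u₀ - v₀, d⟫ + lam * ⟪u₁ - v₁, d⟫ ≤ -α * ‖d‖ ^ 2 := by
  obtain ⟨K₀, U₀, hU₀, hlip₀⟩ := hh₀
  obtain ⟨K₁, U₁, hU₁, hlip₁⟩ := hh₁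
  have hbdd₀ := hlip₀.dirDiffQuot_isBigO_one hU₀ d
  have hbdd₁ := hlip₁.dirDiffQuot_isBigO_one hU₁ d
  have hφ₀ := hg₀.hasFDerivAt.dirDiffQuot_sub_isBigO_one hbdd₀
  have hφ₁ := hg₁.hasFDerivAt.dirDiffQuot_sub_isBigO_one hbdd₁
  have hcont₁ : ContinuousAt (fun y => g₁ y - h₁ y) x :=
    hg₁.hasFDerivAt.continuousAt.sub (hlip₁.continuousOn.continuousAt hU₁)
  refine ⟨?_, ?_⟩
  · calc upperDirDeriv (fun y => (1 / p) * (g₀ y - h₀ y) + max (g₁ y - h₁ y) 0) x d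
        ≤ (1 / p) * upperDirDeriv (fun y => g₀ y - h₀ y) x d +
            upperDirDeriv (fun y => max (g₁ y - h₁ y) 0) x d :=
          upperDirDeriv_const_mul_add_le hφ₀ (isBigO_dirDiffQuot_max_zero hφ₁) (by positivity)
      _ ≤ (1 / p) * ⟪u₀ - v₀, d⟫ + lam * ⟪u₁ - v₁, d⟫ := by
          gcongr
          · exact upperDirDeriv_sub_le_of_hasGradientAt hg₀ hbdd₀ hv₀
          · exact upperDirDeriv_max_zero_le_of_complementarity hcont₁ hφ₁
              (upperDirDeriv_sub_le_of_hasGradientAt hg₁ hbdd₁ hv₁) hlam hc1 hc2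
  · have hdesc := inner_le_neg_mul_norm_sq_of_forall_inner_nonneg hx hvi
    rwa [inner_add_left, real_inner_smul_left, real_inner_smul_left] at hdesc

/-- descent property of the subproblem solution for the penalty function
`φ_p(x) := (1/p)(g₀(x) − h₀(x)) + max{g₁(x) − h₁(x), 0}`:
`(φ_p)'(x; d) ≤ (1/p)⟨∇g₀(x) − v₀, d⟩ + λ⟨∇g₁(x) − v₁, d⟩ ≤ −α‖d‖²`. -/
theorem penalty_descent_direction {n : ℕ} (X : Set (EuclideanSpace ℝ (Fin n)))
    (hXne : X.Nonempty) (hXconv : Convex ℝ X)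
    (x : EuclideanSpace ℝ (Fin n)) (hx : x ∈ X)
    (p α : ℝ) (hp : 0 < p) (hα : 0 < α)
    (d : EuclideanSpace ℝ (Fin n)) (hdX : x + d ∈ X)
    (g₀ g₁ h₀ h₁ : EuclideanSpace ℝ (Fin n) → ℝ)
    (u₀ u₁ : EuclideanSpace ℝ (Fin n))
    (hg₀ : HasGradientAt g₀ u₀ x) (hg₁ : HasGradientAt g₁ u₁ x)
    (hh₀ : ∃ K : NNReal, ∃ U ∈ nhds x, LipschitzOnWith K h₀ U)
    (hh₁ : ∃ K : NNReal, ∃ U ∈ nhds x, LipschitzOnWith K h₁ U)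
    (v₀ v₁ : EuclideanSpace ℝ (Fin n))
    (hv₀ : upperDirDeriv (fun y => -h₀ y) x d ≤ ⟪-v₀, d⟫)
    (hv₁ : upperDirDeriv (fun y => -h₁ y) x d ≤ ⟪-v₁, d⟫)
    (lam : ℝ) (hlam : lam ∈ Set.Icc (0 : ℝ) 1)
    (hc1 : lam * min ((g₁ x - h₁ x) + ⟪u₁ - v₁, d⟫) 0 = 0)
    (hc2 : (1 - lam) * max ((g₁ x - h₁ x) + ⟪u₁ - v₁, d⟫) 0 = 0)
    (hvi : ∀ u ∈ X,
      0 ≤ ⟪(1 / p) • (u₀ - v₀) + lam • (u₁ - v₁) + α • d, u - (x + d)⟫) :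
    upperDirDeriv (fun y => (1 / p) * (g₀ y - h₀ y) + max (g₁ y - h₁ y) 0) x d ≤
        (1 / p) * ⟪u₀ - v₀, d⟫ + lam * ⟪u₁ - v₁, d⟫ ∧
      (1 / p) * ⟪u₀ - v₀, d⟫ + lam * ⟪u₁ - v₁, d⟫ ≤ -α * ‖d‖ ^ 2 :=
  penalty_descent_direction_general X x hx p α hp d g₀ g₁ h₀ h₁ u₀ u₁ hg₀ hg₁ hh₀ hh₁ v₀ v₁ hv₀ hv₁
    lam hlam hc1 hc2 hvi
end

section
/- Let s ∈ ℕ and let ζ_i : ℝ^{m₁} × ℝ^{m₂} → ℝ, i = 1,…,s, be convex and continuous; define Γ(y) := {z ∈ ℝ^{m₂} : ζ_i(y,z) ≤ 0 for all i}. Let (ȳ, z̄) ∈ ℝ^{m₁} × ℝ^{m₂}, ε > 0, and write B := {(y,z) : ‖(y,z) − (ȳ,z̄)‖ ≤ ε}. Let F : ℝ^{m₁} × ℝ^{m₂} → ℝ^{m₂} be differentiable on an open set containing B, and let L_F, L_{∇F} > 0 satisfy ‖F(w) − F(w')‖ ≤ L_F‖w − w'‖ and ‖DF(w) − DF(w')‖_{op}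 ≤ L_{∇F}‖w − w'‖ for all w, w' in that open set. Let γ > 0, suppose Γ(y) ≠ ∅ for every (y,z) ∈ B, and suppose there is M_θ > 0 such that for every (y,z) ∈ B there exists a minimizer θ*(y,z) ∈ Γ(y) of θ ↦ ⟨F(y,z), θ⟩ + (1/(2γ))‖θ − z‖² over Γ(y) with ‖θ*(y,z)‖ ≤ M_θ. Then the function (y,z) ↦ μ_γ(y,z) + (γ L_F² + L_{∇F} M_θ + 1/(2γ)) ‖(y,z)‖² is convex on B, where μ_γ(y,z) := inf_{θ ∈ Γ(y)} ( ⟨F(y,z), θ⟩ + (1/(2γ))‖θ − z‖² ). In particular, μ_γ is prox-regular at (ȳ, z̄). -/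
/-!
On `B × {‖θ‖ ≤ M_θ}` the function `(w, θ) ↦ ⟪F w, θ⟫ + ‖θ - z‖² / (2γ) + c ‖w‖²`, with
`c = γ L_F² + L_{∇F} M_θ + 1 / (2γ)`, is jointly convex: along a segment, the Taylor remainders
of `F` at the convex combination cost `L_{∇F} M_θ ‖w - w'‖²`, and the cross term
`⟪DF (w - w'), θ - θ'⟫` is absorbed by Young's inequality into the prox term and
`(γ L_F² + 1 / (2γ)) ‖w - w'‖²`. The graph of `Γ` is convex and the infimum defining `μ_γ` is
attained inside `{‖θ‖ ≤ M_θ}`, so the marginal `μ_γ + c ‖·‖²` of that function is convex.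
-/

open scoped RealInnerProductSpace

open Metric

section InnerProduct

variable {E : Type*} [NormedAddCommGroup E] [InnerProductSpace ℝ E]

theorem norm_smul_add_smul_sq (x y : E) {a b : ℝ} (hab : a + b = 1) :
    ‖a • x + b • y‖ ^ 2 = a * ‖x‖ ^ 2 + b * ‖y‖ ^ 2 - a * b * ‖x - y‖ ^ 2 := by
  obtain rfl := eq_sub_of_add_eq' hab
  rw [norm_add_sq_real, norm_sub_sq_real, norm_smul, norm_smul, real_inner_smul_left,
    real_inner_smul_right, mul_pow, mul_pow, Real.norm_eq_abs, Real.norm_eq_abs, sq_abs, sq_abs]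
  ring

theorem neg_young_le_real_inner (v x : E) {γ : ℝ} (hγ : 0 < γ) :
    -(γ / 2 * ‖v‖ ^ 2 + 1 / (2 * γ) * ‖x‖ ^ 2) ≤ ⟪v, x⟫ := by
  have h : γ / 2 * ‖v‖ ^ 2 + 1 / (2 * γ) * ‖x‖ ^ 2 + ⟪v, x⟫ = ‖γ • v + x‖ ^ 2 / (2 * γ) := by
    rw [norm_add_sq_real, norm_smul, real_inner_smul_left, Real.norm_of_nonneg hγ.le]
    field_simp
    ring
  have : 0 ≤ ‖γ • v + x‖ ^ 2 / (2 * γ) := by positivity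
  linarith

theorem real_inner_sub_le_of_norm_sub_le {r v θ : E} {δ M : ℝ} (hr : ‖r - v‖ ≤ δ)
    (hθ : ‖θ‖ ≤ M) : ⟪v, θ⟫ - δ * M ≤ ⟪r, θ⟫ := by
  have hδ : ‖r - v‖ * ‖θ‖ ≤ δ * M := mul_le_mul hr hθ (norm_nonneg _) ((norm_nonneg _).trans hr)
  have := neg_le_of_abs_le ((abs_real_inner_le_norm (r - v) θ).trans hδ)
  rw [inner_sub_left] at this
  linarith

theorem neg_le_real_inner_add_of_norm_le {v d e : E} {γ L r : ℝ} (hγ : 0 < γ)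
    (hv : ‖v‖ ≤ L * r) (he : ‖e‖ ≤ r) :
    -(1 / (2 * γ) * ‖d‖ ^ 2 + (γ * L ^ 2 + 1 / (2 * γ)) * r ^ 2) ≤ ⟪v, d + e⟫ := by
  have hv2 : γ * ‖v‖ ^ 2 ≤ γ * (L ^ 2 * r ^ 2) := by
    rw [← mul_pow]; gcongr
  have he2 : 1 / (2 * γ) * ‖e‖ ^ 2 ≤ 1 / (2 * γ) * r ^ 2 := by gcongr
  rw [inner_add_right]
  linarith [neg_young_le_real_inner v d hγ, neg_young_le_real_inner v e hγ]

end InnerProduct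

theorem norm_sub_sub_fderiv_le_of_lipschitz_fderiv {E F : Type*} [NormedAddCommGroup E]
    [NormedSpace ℝ E] [NormedAddCommGroup F] [NormedSpace ℝ F] {f : E → F} {s : Set E} {K : ℝ}
    (hs : Convex ℝ s) (hK : 0 ≤ K) (hf : ∀ x ∈ s, DifferentiableAt ℝ f x)
    (hf' : ∀ x ∈ s, ∀ y ∈ s, ‖fderiv ℝ f x - fderiv ℝ f y‖ ≤ K * ‖x - y‖)
    {x y : E} (hx : x ∈ s) (hy : y ∈ s) :
    ‖f y - f x - fderiv ℝ f x (y - x)‖ ≤ K * ‖y - x‖ ^ 2 := by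
  have hseg := hs.segment_subset hx hy
  have bound : ∀ z ∈ segment ℝ x y, ‖fderiv ℝ f z - fderiv ℝ f x‖ ≤ K * ‖y - x‖ :=
    fun z hz => (hf' z (hseg hz) x hx).trans
      (mul_le_mul_of_nonneg_left (norm_sub_le_of_mem_segment hz) hK)
  rw [sq, ← mul_assoc]
  exact (convex_segment x y).norm_image_sub_le_of_norm_fderiv_le' (fun z hz => hf z (hseg hz))
    bound (left_mem_segment ℝ x y) (right_mem_segment ℝ x y)

section GapObjective

variable {W E : Type*} [NormedAddCommGroup W] [InnerProductSpace ℝ W]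
  [NormedAddCommGroup E] [InnerProductSpace ℝ E]

theorem convexOn_inner_add_prox_add_sq {F : W → E} {F' : W → W →L[ℝ] E} {P : W →ₗ[ℝ] E}
    {s : Set W} {γ L K M : ℝ} (hs : Convex ℝ s) (hγ : 0 < γ) (hP : ∀ u, ‖P u‖ ≤ ‖u‖)
    (hF' : ∀ p ∈ s, ‖F' p‖ ≤ L)
    (hF : ∀ p ∈ s, ∀ q ∈ s, ‖F q - F p - F' p (q - p)‖ ≤ K * ‖q - p‖ ^ 2) :
    ConvexOn ℝ (s ×ˢ closedBall (0 : E) M) fun x : W × E =>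
      ⟪F x.1, x.2⟫ + 1 / (2 * γ) * ‖x.2 - P x.1‖ ^ 2 +
        (γ * L ^ 2 + K * M + 1 / (2 * γ)) * ‖x.1‖ ^ 2 := by
  refine ⟨hs.prod (convex_closedBall 0 M), ?_⟩
  rintro ⟨w, θ⟩ ⟨hw, hθ⟩ ⟨w', θ'⟩ ⟨hw', hθ'⟩ a b ha hb hab
  dsimp only at hw hw' hθ hθ'
  rw [mem_closedBall_zero_iff] at hθ hθ'
  simp only [Prod.smul_mk, Prod.mk_add_mk, smul_eq_mul]
  set v := a • w + b • w'
  set A := F' v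
  set u := w - w'
  have hvw : w - v = b • u := by simp only [v, u, eq_sub_of_add_eq hab]; module
  have hvw' : w' - v = (-a) • u := by simp only [v, u, eq_sub_of_add_eq' hab]; module
  have hw_gap : b * ⟪A u, θ⟫ - K * (b ^ 2 * ‖u‖ ^ 2) * M ≤ ⟪F w - F v, θ⟫ := by
    have := real_inner_sub_le_of_norm_sub_le (hF v (hs hw hw' ha hb hab) w hw) hθ
    rwa [hvw, map_smul, real_inner_smul_left, norm_smul, Real.norm_of_nonneg hb, mul_pow] at this
  have hw'_gap : -a * ⟪A u, θ'⟫ - K * (a ^ 2 * ‖u‖ ^ 2) * M ≤ ⟪F w' - F v, θ'⟫ := by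
    have := real_inner_sub_le_of_norm_sub_le (hF v (hs hw hw' ha hb hab) w' hw') hθ'
    rwa [hvw', map_smul, real_inner_smul_left, norm_smul, norm_neg, Real.norm_of_nonneg ha,
      mul_pow] at this
  have hcross := neg_le_real_inner_add_of_norm_le (d := (θ - P w) - (θ' - P w')) hγ
    ((A.le_opNorm u).trans (mul_le_mul_of_nonneg_right (hF' v (hs hw hw' ha hb hab))
      (norm_nonneg u))) (hP u)
  have hθθ' : (θ - P w - (θ' - P w')) + P u = θ - θ' := by simp only [u, map_sub]; abel
  have hprox : a • θ + b • θ' - P v = a • (θ - P w) + b • (θ' - P w') := by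
    simp only [v, map_add, map_smul]; module
  rw [hθθ', inner_sub_right] at hcross
  rw [hprox, norm_smul_add_smul_sq _ _ hab, norm_smul_add_smul_sq _ _ hab, inner_add_right,
    real_inner_smul_right, real_inner_smul_right]
  rw [inner_sub_left] at hw_gap hw'_gap
  linear_combination a * hw_gap + b * hw'_gap + (a * b) * hcross + (K * M * a * b * ‖u‖ ^ 2) * hab

end GapObjective

theorem ConvexOn.marginal_of_attained {W T : Type*} [AddCommGroup W] [Module ℝ W]
    [AddCommGroup T] [Module ℝ T] {s : Set W} {K : Set T} {C : W → Set T} {Φ : W × T → ℝ}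
    {g : W → ℝ} (hΦ : ConvexOn ℝ (s ×ˢ K) Φ) (hC : Convex ℝ {p : W × T | p.2 ∈ C p.1})
    (hg : ∀ w ∈ s, ∃ θ ∈ C w ∩ K, g w = Φ (w, θ) ∧ ∀ θ' ∈ C w, Φ (w, θ) ≤ Φ (w, θ')) :
    ConvexOn ℝ s g := by
  have hs : Convex ℝ s := by
    intro w hw w' hw' a b ha hb hab
    obtain ⟨θ, ⟨-, hθ⟩, -⟩ := hg w hw
    obtain ⟨θ', ⟨-, hθ'⟩, -⟩ := hg w' hw'
    exact (hΦ.1 (Set.mk_mem_prod hw hθ) (Set.mk_mem_prod hw' hθ') ha hb hab).1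
  refine ⟨hs, fun w hw w' hw' a b ha hb hab => ?_⟩
  obtain ⟨θ, ⟨hθC, hθK⟩, hgw, -⟩ := hg w hw
  obtain ⟨θ', ⟨hθ'C, hθ'K⟩, hgw', -⟩ := hg w' hw'
  obtain ⟨θ'', -, hgw'', hmin⟩ := hg _ (hs hw hw' ha hb hab)
  calc g (a • w + b • w') ≤ Φ (a • (w, θ) + b • (w', θ')) :=
        hgw'' ▸ hmin _ (hC (x := (w, θ)) (y := (w', θ')) hθC hθ'C ha hb hab)
    _ ≤ a • Φ (w, θ) + b • Φ (w', θ') :=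
        hΦ.2 (Set.mk_mem_prod hw hθK) (Set.mk_mem_prod hw' hθ'K) ha hb hab
    _ = a • g w + b • g w' := by rw [hgw, hgw']

theorem gapValue_convexification_general {m₁ m₂ s : ℕ}
    (ζ : Fin s → EuclideanSpace ℝ (Fin m₁) × EuclideanSpace ℝ (Fin m₂) → ℝ)
    (hζconv : ∀ i, ConvexOn ℝ Set.univ (ζ i))
    (Γ : EuclideanSpace ℝ (Fin m₁) → Set (EuclideanSpace ℝ (Fin m₂)))
    (hΓ : ∀ y, Γ y = {z | ∀ i, ζ i (y, z) ≤ 0})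
    (F : WithLp 2 (EuclideanSpace ℝ (Fin m₁) × EuclideanSpace ℝ (Fin m₂)) →
      EuclideanSpace ℝ (Fin m₂))
    (xb : WithLp 2 (EuclideanSpace ℝ (Fin m₁) × EuclideanSpace ℝ (Fin m₂)))
    (ε : ℝ) (hε : 0 < ε)
    (O : Set (WithLp 2 (EuclideanSpace ℝ (Fin m₁) × EuclideanSpace ℝ (Fin m₂))))
    (hO : IsOpen O) (hBO : Metric.closedBall xb ε ⊆ O)
    (hdiff : ∀ w ∈ O, DifferentiableAt ℝ F w)
    (L_F LdF : ℝ) (hLF : 0 < L_F) (hLdF : 0 < LdF)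
    (hlip : ∀ w ∈ O, ∀ w' ∈ O, ‖F w - F w'‖ ≤ L_F * ‖w - w'‖)
    (hlip' : ∀ w ∈ O, ∀ w' ∈ O, ‖fderiv ℝ F w - fderiv ℝ F w'‖ ≤ LdF * ‖w - w'‖)
    (γ : ℝ) (hγ : 0 < γ)
    (Mθ : ℝ) (hMθ : 0 < Mθ)
    (hθ : ∀ w ∈ Metric.closedBall xb ε, ∃ θ ∈ Γ (WithLp.equiv 2 _ w).1,
      ‖θ‖ ≤ Mθ ∧ ∀ θ' ∈ Γ (WithLp.equiv 2 _ w).1,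
        ⟪F w, θ⟫ + (1 / (2 * γ)) * ‖θ - (WithLp.equiv 2 _ w).2‖ ^ 2 ≤
        ⟪F w, θ'⟫ + (1 / (2 * γ)) * ‖θ' - (WithLp.equiv 2 _ w).2‖ ^ 2)
    (μ : WithLp 2 (EuclideanSpace ℝ (Fin m₁) × EuclideanSpace ℝ (Fin m₂)) → ℝ)
    (hμ : ∀ w, μ w = sInf
      ((fun θ => ⟪F w, θ⟫ + (1 / (2 * γ)) * ‖θ - (WithLp.equiv 2 _ w).2‖ ^ 2) ''
        Γ (WithLp.equiv 2 _ w).1)) :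
    ConvexOn ℝ (Metric.closedBall xb ε)
      (fun w => μ w + (γ * L_F ^ 2 + LdF * Mθ + 1 / (2 * γ)) * ‖w‖ ^ 2) ∧
    ∃ ρ > (0 : ℝ), ∃ δ > (0 : ℝ), ConvexOn ℝ (Metric.closedBall xb δ)
      (fun w => μ w + (ρ / 2) * ‖w‖ ^ 2) := by
  set c := γ * L_F ^ 2 + LdF * Mθ + 1 / (2 * γ)
  have hB : Convex ℝ (closedBall xb ε) := convex_closedBall xb ε
  have hF' : ∀ p ∈ closedBall xb ε, ‖fderiv ℝ F p‖ ≤ L_F := fun p hp =>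
    norm_fderiv_le_of_lip' ℝ hLF.le (Filter.eventually_of_mem (hO.mem_nhds (hBO hp))
      fun q hq => hlip q hq p (hBO hp))
  have hΦ := convexOn_inner_add_prox_add_sq (M := Mθ) (P := WithLp.sndₗ 2 ℝ _ _) hB hγ
    (WithLp.norm_snd_le _) hF'
    (fun p hp q hq => norm_sub_sub_fderiv_le_of_lipschitz_fderiv hB hLdF.le
      (fun x hx => hdiff x (hBO hx)) (fun x hx y hy => hlip' x (hBO hx) y (hBO hy)) hp hq)
  have hfeas : Convex ℝ {x | ∀ i, ζ i x ≤ 0} := by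
    simpa only [Set.ofPred_forall, Set.mem_univ, true_and] using
      convex_iInter fun i => (hζconv i).convex_le 0
  have hmain : ConvexOn ℝ (closedBall xb ε) fun w => μ w + c * ‖w‖ ^ 2 := by
    refine hΦ.marginal_of_attained (C := fun w => Γ (WithLp.equiv 2 _ w).1) ?_ fun w hw => ?_
    · simpa [hΓ] using hfeas.linear_preimage ((WithLp.fstₗ 2 ℝ _ _).prodMap LinearMap.id)
    obtain ⟨θ, hθΓ, hθM, hθmin⟩ := hθ w hw
    have hμθ := (hμ w).trans
      (IsLeast.csInf_eq ⟨Set.mem_image_of_mem _ hθΓ, Set.forall_mem_image.2 hθmin⟩)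
    refine ⟨θ, ⟨hθΓ, mem_closedBall_zero_iff.2 hθM⟩, by rw [hμθ]; rfl, fun θ' hθ' => ?_⟩
    simpa using hθmin θ' hθ'
  exact ⟨hmain, 2 * c, by positivity, ε, hε, by simpa [c] using hmain⟩

/-- convexification of the regularized gap-value function. The pair
`(y,z)` is modeled as an element `w` of the ℓ²-product
`WithLp 2 (ℝ^{m₁} × ℝ^{m₂})`, so that `‖w‖` is the Euclidean norm of the pair.
With `Γ(y) := {z : ζ_i(y,z) ≤ 0 ∀ i}` (each `ζ_i` jointly convex continuous),
`F` differentiable on an open set `O ⊇ B := closedBall((ȳ,z̄), ε)` with `F`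
`L_F`-Lipschitz and `DF` `L_{∇F}`-Lipschitz on `O`, and a minimizer of
`θ ↦ ⟨F(y,z), θ⟩ + (1/(2γ))‖θ − z‖²` over `Γ(y)` of norm at most `M_θ` for every
`(y,z) ∈ B`, the function `μ_γ + (γL_F² + L_{∇F}M_θ + 1/(2γ))‖·‖²` is convex on `B`;
in particular `μ_γ` plus a positive multiple of the squared norm is convex on a
neighborhood of `(ȳ,z̄)`, i.e. `μ_γ` is prox-regular there. -/
theorem gapValue_convexification {m₁ m₂ s : ℕ}
    (ζ : Fin s → EuclideanSpace ℝ (Fin m₁) × EuclideanSpace ℝ (Fin m₂) → ℝ)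
    (hζconv : ∀ i, ConvexOn ℝ Set.univ (ζ i))
    (hζcont : ∀ i, Continuous (ζ i))
    (Γ : EuclideanSpace ℝ (Fin m₁) → Set (EuclideanSpace ℝ (Fin m₂)))
    (hΓ : ∀ y, Γ y = {z | ∀ i, ζ i (y, z) ≤ 0})
    (F : WithLp 2 (EuclideanSpace ℝ (Fin m₁) × EuclideanSpace ℝ (Fin m₂)) →
      EuclideanSpace ℝ (Fin m₂))
    (xb : WithLp 2 (EuclideanSpace ℝ (Fin m₁) × EuclideanSpace ℝ (Fin m₂)))
    (ε : ℝ) (hε : 0 < ε)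
    (O : Set (WithLp 2 (EuclideanSpace ℝ (Fin m₁) × EuclideanSpace ℝ (Fin m₂))))
    (hO : IsOpen O) (hBO : Metric.closedBall xb ε ⊆ O)
    (hdiff : ∀ w ∈ O, DifferentiableAt ℝ F w)
    (L_F LdF : ℝ) (hLF : 0 < L_F) (hLdF : 0 < LdF)
    (hlip : ∀ w ∈ O, ∀ w' ∈ O, ‖F w - F w'‖ ≤ L_F * ‖w - w'‖)
    (hlip' : ∀ w ∈ O, ∀ w' ∈ O, ‖fderiv ℝ F w - fderiv ℝ F w'‖ ≤ LdF * ‖w - w'‖)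
    (γ : ℝ) (hγ : 0 < γ)
    (hΓne : ∀ w ∈ Metric.closedBall xb ε, (Γ (WithLp.equiv 2 _ w).1).Nonempty)
    (Mθ : ℝ) (hMθ : 0 < Mθ)
    (hθ : ∀ w ∈ Metric.closedBall xb ε, ∃ θ ∈ Γ (WithLp.equiv 2 _ w).1,
      ‖θ‖ ≤ Mθ ∧ ∀ θ' ∈ Γ (WithLp.equiv 2 _ w).1,
        ⟪F w, θ⟫ + (1 / (2 * γ)) * ‖θ - (WithLp.equiv 2 _ w).2‖ ^ 2 ≤
        ⟪F w, θ'⟫ + (1 / (2 * γ)) * ‖θ' - (WithLp.equiv 2 _ w).2‖ ^ 2)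
    (μ : WithLp 2 (EuclideanSpace ℝ (Fin m₁) × EuclideanSpace ℝ (Fin m₂)) → ℝ)
    (hμ : ∀ w, μ w = sInf
      ((fun θ => ⟪F w, θ⟫ + (1 / (2 * γ)) * ‖θ - (WithLp.equiv 2 _ w).2‖ ^ 2) ''
        Γ (WithLp.equiv 2 _ w).1)) :
    ConvexOn ℝ (Metric.closedBall xb ε)
      (fun w => μ w + (γ * L_F ^ 2 + LdF * Mθ + 1 / (2 * γ)) * ‖w‖ ^ 2) ∧
    ∃ ρ > (0 : ℝ), ∃ δ > (0 : ℝ), ConvexOn ℝ (Metric.closedBall xb δ)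
      (fun w => μ w + (ρ / 2) * ‖w‖ ^ 2) :=
  gapValue_convexification_general ζ hζconv Γ hΓ F xb ε hε O hO hBO hdiff L_F LdF hLF hLdF hlip
    hlip' γ hγ Mθ hMθ hθ μ hμ
end
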